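/- Define C_d(t) = ∫₀^t (p(s)·p(t−s)/p(t)) ds where p(t) = ((1 + e^{-2t/d})/2)^d. Then for all sufficiently large integers d there exist 0 < t₁ < t₂ with C_d(t₁) > C_d(t₂); in particular C_d is not monotonically non-decreasing. -/

import Mathlib

/-- Return probability at time `t` of the continuous-time walk on the `d`-dimensional
hypercube. -/
noncomputable def hcReturnProb (d : ℕ) (t : ℝ) : ℝ := ((1 + Real.exp (-2 * t / d)) / 2) ^ d

/-- Expected time spent at the origin up to time `t` conditioned on being at the origin
at time `t`. -/
noncomputable def hcCondTime (d : ℕ) (t : ℝ) : ℝ :=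
  ∫ s in (0 : ℝ)..t, hcReturnProb d s * hcReturnProb d (t - s) / hcReturnProb d t

/-!
With `x = e^{-2s/d}` and `y = e^{-2(t-s)/d}` the integrand of `C_d(t)` is `(1 - δ)^d`, where
`δ = (1 - x)(1 - y) / (2(1 + xy))`. Since `1 - x ≤ 2s/d` and `1 - y ≤ 2(t-s)/d`, we get
`δ ≤ t²/(2d²)`, and Bernoulli's inequality bounds the integrand below by `1 - t²/(2d)`;
at `t = √d` this gives `C_d(√d) ≥ √d/2`. At `t = d` and `s ≤ d/2` instead `1 - x ≥ s/d` and
`y ≤ e^{-1} < 1/2`, so `δ ≥ s/(8d)` and the integrand is at most `e^{-s/8}`; by the symmetry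
`s ↦ d - s` of the integrand, `C_d(d) ≤ 2 ∫₀^∞ e^{-s/8} ds = 16 < √d/2` once `d > 1024`.
-/

open Real MeasureTheory

lemma exp_neg_le_one_sub_half {u : ℝ} (h0 : 0 ≤ u) (h1 : u ≤ 1) : exp (-u) ≤ 1 - u / 2 := by
  rw [exp_neg, inv_le_iff_one_le_mul₀ (exp_pos u)]
  nlinarith [add_one_le_exp u]

lemma integral_exp_neg_div_le {c : ℝ} (hc : 0 < c) (L : ℝ) :
    ∫ s in (0 : ℝ)..L, exp (-s / c) ≤ c := by
  have h := intervalIntegral.integral_comp_div (fun u => exp (-u)) hc.ne' (a := 0) (b := L)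
  simp only [neg_div] at h ⊢
  rw [h, intervalIntegral.integral_comp_neg]
  simp only [integral_exp, neg_zero, exp_zero, zero_div, smul_eq_mul]
  nlinarith [exp_pos (-(L / c))]

lemma exp_neg_two_mul_div_bounds (d : ℕ) {a : ℝ} (ha : 0 ≤ a) :
    0 < exp (-2 * a / d) ∧ exp (-2 * a / d) ≤ 1 ∧ 1 - 2 * a / d ≤ exp (-2 * a / d) := by
  have h := one_sub_le_exp_neg (2 * a / d)
  rw [← neg_div, ← neg_mul] at h
  refine ⟨exp_pos _, exp_le_one_iff.mpr ?_, h⟩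
  rw [neg_mul, neg_div]
  exact neg_nonpos.mpr (by positivity)

@[fun_prop]
lemma continuous_hcReturnProb (d : ℕ) : Continuous (hcReturnProb d) := by
  unfold hcReturnProb; fun_prop

noncomputable def hcDeficit (d : ℕ) (a b : ℝ) : ℝ :=
  (1 - exp (-2 * a / d)) * (1 - exp (-2 * b / d)) /
    (2 * (1 + exp (-2 * a / d) * exp (-2 * b / d)))

lemma hcReturnProb_mul_div_eq (d : ℕ) (t s : ℝ) :
    hcReturnProb d s * hcReturnProb d (t - s) / hcReturnProb d t =
      (1 - hcDeficit d s (t - s)) ^ d := by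
  have hexp : exp (-2 * s / d) * exp (-2 * (t - s) / d) = exp (-2 * t / d) := by
    rw [← exp_add]; ring_nf
  rw [hcReturnProb, hcReturnProb, hcReturnProb, hcDeficit, ← mul_pow, ← div_pow, ← hexp]
  have hpos : 0 < 1 + exp (-2 * s / d) * exp (-2 * (t - s) / d) := by positivity
  congr 1
  field_simp
  ring

lemma hcDeficit_le (d : ℕ) {a b : ℝ} (ha : 0 ≤ a) (hb : 0 ≤ b) :
    hcDeficit d a b ≤ (a + b) ^ 2 / (2 * d ^ 2) := by
  obtain ⟨hx0, hx1, hx⟩ := exp_neg_two_mul_div_bounds d ha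
  obtain ⟨hy0, hy1, hy⟩ := exp_neg_two_mul_div_bounds d hb
  set x := exp (-2 * a / d)
  set y := exp (-2 * b / d)
  calc hcDeficit d a b ≤ (1 - x) * (1 - y) / 2 := by
        unfold hcDeficit
        gcongr
        nlinarith
    _ ≤ (2 * a / d) * (2 * b / d) / 2 := by gcongr <;> linarith
    _ = 4 * a * b / (2 * d ^ 2) := by ring
    _ ≤ (a + b) ^ 2 / (2 * d ^ 2) := by gcongr; nlinarith [sq_nonneg (a - b)]

lemma hcDeficit_le_half (d : ℕ) {a b : ℝ} (ha : 0 ≤ a) (hb : 0 ≤ b) :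
    hcDeficit d a b ≤ 1 / 2 := by
  obtain ⟨hx0, hx1, -⟩ := exp_neg_two_mul_div_bounds d ha
  obtain ⟨hy0, hy1, -⟩ := exp_neg_two_mul_div_bounds d hb
  unfold hcDeficit
  rw [div_le_iff₀ (by positivity)]
  nlinarith [mul_pos hx0 hy0]

lemma hcDeficit_ge {d : ℕ} (hd : 0 < d) {a b : ℝ} (ha : 0 ≤ a) (had : 2 * a ≤ d)
    (hbd : d ≤ 2 * b) : a / (8 * d) ≤ hcDeficit d a b := by
  obtain ⟨hx0, hx1, -⟩ := exp_neg_two_mul_div_bounds d ha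
  obtain ⟨hy0, hy1, -⟩ := exp_neg_two_mul_div_bounds d (a := b) (by linarith)
  set x := exp (-2 * a / d)
  set y := exp (-2 * b / d)
  have hd' : (0 : ℝ) < d := by exact_mod_cast hd
  have hy : y ≤ 1 / 2 := by
    refine le_trans (exp_le_exp.mpr ?_) exp_neg_one_lt_half.le
    rw [div_le_iff₀ hd']; linarith
  have hx : a / d ≤ 1 - x := by
    have h := exp_neg_le_one_sub_half (u := 2 * a / d) (by positivity)
      (by rw [div_le_one hd']; exact had)
    rw [← neg_div, ← neg_mul] at h
    linarith [show 2 * a / d / 2 = a / d by ring]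
  calc a / (8 * d) = (a / d) * (1 / 2) / 4 := by field_simp; ring
    _ ≤ (1 - x) * (1 - y) / (2 * (1 + 1)) := by gcongr <;> linarith
    _ ≤ hcDeficit d a b := by
        unfold hcDeficit
        gcongr
        nlinarith

lemma one_sub_sq_div_le_hcReturnProb_mul_div (d : ℕ) {t s : ℝ} (hs : 0 ≤ s) (hst : s ≤ t) :
    1 - t ^ 2 / (2 * d) ≤ hcReturnProb d s * hcReturnProb d (t - s) / hcReturnProb d t := by
  have hts : 0 ≤ t - s := by linarith
  have hδ := hcDeficit_le d hs hts
  rw [add_sub_cancel] at hδ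
  rw [hcReturnProb_mul_div_eq]
  calc 1 - t ^ 2 / (2 * d) = 1 - d * (t ^ 2 / (2 * d ^ 2)) := by
        rcases eq_or_ne (d : ℝ) 0 with h | h
        · simp [h]
        · field_simp
    _ ≤ 1 - d * hcDeficit d s (t - s) := by gcongr
    _ = 1 + d * -hcDeficit d s (t - s) := by ring
    _ ≤ (1 - hcDeficit d s (t - s)) ^ d :=
        one_add_mul_le_pow (by linarith [hcDeficit_le_half d hs hts]) d

lemma hcReturnProb_mul_div_self_le_exp {d : ℕ} (hd : 0 < d) {s : ℝ} (hs : 0 ≤ s)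
    (hsd : 2 * s ≤ d) :
    hcReturnProb d s * hcReturnProb d (d - s) / hcReturnProb d d ≤ exp (-s / 8) := by
  have hd' : (0 : ℝ) < d := by exact_mod_cast hd
  have hδ := hcDeficit_ge hd hs hsd (b := d - s) (by linarith)
  rw [div_le_iff₀ (by positivity)] at hδ
  rw [hcReturnProb_mul_div_eq]
  calc (1 - hcDeficit d s (d - s)) ^ d ≤ exp (-hcDeficit d s (d - s)) ^ d := by
        gcongr
        · linarith [hcDeficit_le_half d hs (b := d - s) (by linarith)]
        · exact one_sub_le_exp_neg _
    _ = exp (-(d * hcDeficit d s (d - s))) := by rw [← exp_nat_mul]; ring_nf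
    _ ≤ exp (-s / 8) := by rw [exp_le_exp]; linarith

lemma hcCondTime_ge (d : ℕ) {t : ℝ} (ht : 0 ≤ t) :
    t * (1 - t ^ 2 / (2 * d)) ≤ hcCondTime d t := by
  have h := intervalIntegral.integral_mono_on ht (intervalIntegrable_const (μ := volume))
    (by apply Continuous.intervalIntegrable; fun_prop)
    fun s hs => one_sub_sq_div_le_hcReturnProb_mul_div d hs.1 hs.2
  rwa [intervalIntegral.integral_const, smul_eq_mul, sub_zero] at h

lemma hcCondTime_eq_two_mul (d : ℕ) (t : ℝ) :
    hcCondTime d t =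
      2 * ∫ s in (0 : ℝ)..t / 2, hcReturnProb d s * hcReturnProb d (t - s) / hcReturnProb d t := by
  have hint : ∀ a b, IntervalIntegrable
      (fun s => hcReturnProb d s * hcReturnProb d (t - s) / hcReturnProb d t) volume a b :=
    fun a b => by apply Continuous.intervalIntegrable; fun_prop
  have hsymm := intervalIntegral.integral_comp_sub_left
    (fun s => hcReturnProb d s * hcReturnProb d (t - s) / hcReturnProb d t) t (a := 0) (b := t / 2)
  simp only [sub_sub_cancel, sub_zero, sub_half, mul_comm (hcReturnProb d (t - _))] at hsymm
  rw [hcCondTime, ← intervalIntegral.integral_add_adjacent_intervals (hint 0 (t / 2)) (hint _ t),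
    ← hsymm]
  ring

lemma hcCondTime_self_le {d : ℕ} (hd : 0 < d) : hcCondTime d d ≤ 16 := by
  have hd' : (0 : ℝ) < d := by exact_mod_cast hd
  have h := intervalIntegral.integral_mono_on (μ := volume) (by positivity : (0 : ℝ) ≤ d / 2)
    (by apply Continuous.intervalIntegrable; fun_prop)
    (by apply Continuous.intervalIntegrable; fun_prop)
    fun s hs => hcReturnProb_mul_div_self_le_exp hd hs.1 (by linarith [hs.2])
  rw [hcCondTime_eq_two_mul]
  linarith [integral_exp_neg_div_le (by norm_num : (0 : ℝ) < 8) (d / 2)]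

theorem hcCondTime_not_monotone :
    ∃ D : ℕ, ∀ d : ℕ, D ≤ d → ∃ t₁ t₂ : ℝ, 0 < t₁ ∧ t₁ < t₂ ∧
      hcCondTime d t₂ < hcCondTime d t₁ := by
  refine ⟨1025, fun d hd => ?_⟩
  have hd' : (1025 : ℝ) ≤ d := by exact_mod_cast hd
  have hsqrt : 32 < √d := by rw [lt_sqrt (by norm_num)]; linarith
  refine ⟨√d, d, by positivity, by rw [sqrt_lt_self_iff]; linarith, ?_⟩
  calc hcCondTime d d ≤ 16 := hcCondTime_self_le (by omega)
    _ < √d * (1 - √d ^ 2 / (2 * d)) := by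
        rw [sq_sqrt (by positivity), div_mul_cancel_right₀ (by positivity)]
        linarith
    _ ≤ hcCondTime d √d := hcCondTime_ge d (sqrt_nonneg _)
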